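/- Let {E_i}_{i=1}^n be a POVM on ℂ^d with d ≤ n, n ≥ 2, and every effect E_i nonzero, and let S be the n×n Gram matrix with entries S_{ij} = tr(√E_i √E_j). Then for every real number γ, Σ_{i,j=1}^n (S_{ij} − γ·δ_{ij})² ≥ (1 − γ)² + (n−1)·((d−1)/(n−1) − γ)², where δ_{ij} is the Kronecker delta. The right-hand side equals the squared Frobenius norm ‖S_EA − γ·1‖_F² for the Gram matrix S_EA of an equiangular POVM with n effects. -/

import Mathlib

/-!
`S` is the Gram matrix of the vectors `√E i` in Hilbert–Schmidt space, and `tr S = ∑ tr E i = d`.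
Put `w i = tr √E i`. Since `(tr √E)² ≥ tr E`, we get `|w|² ≥ d`; Cauchy–Schwarz against the
identity for `M = ∑ w i • √E i` gives `|w|⁴ = (tr M)² ≤ d · tr M² = d · wᵀ S w`. Hence the Rayleigh
quotient `μ` of `S` at `w` is at least `1`. Bessel's inequality for the Frobenius-orthogonal pair
`P = w wᵀ / |w|²`, `1 - P` gives `‖S‖² ≥ μ² + (d - μ)² / (n - 1)`, which is increasing in
`μ ≥ d / n`, so `‖S‖² ≥ 1 + (d - 1)² / (n - 1)`. Finally `‖S - γ 1‖² = ‖S‖² - 2γd + nγ²`.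
-/

open Matrix BigOperators
open scoped ComplexOrder

/-- The positive semidefinite square root, as defined in the older Mathlib. -/
noncomputable def Matrix.PosSemidef.sqrt {n : Type*} [Fintype n] [DecidableEq n]
    {𝕜 : Type*} [RCLike 𝕜] {A : Matrix n n 𝕜} (hA : A.PosSemidef) : Matrix n n 𝕜 :=
  hA.1.eigenvectorUnitary.1 * diagonal ((↑) ∘ (√·) ∘ hA.1.eigenvalues) *
  (star hA.1.eigenvectorUnitary : Matrix n n 𝕜)

open scoped MatrixOrder

lemma one_add_sq_div_le_sq_add_sq_div {N t μ : ℝ} (hN : 1 < N) (ht : t ≤ N) (hμ : 1 ≤ μ) :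
    1 + (t - 1) ^ 2 / (N - 1) ≤ μ ^ 2 + (t - μ) ^ 2 / (N - 1) := by
  have hN1 : 0 < N - 1 := by linarith
  have key : μ ^ 2 + (t - μ) ^ 2 / (N - 1) - (1 + (t - 1) ^ 2 / (N - 1)) =
      (μ - 1) * (N * μ + N - 2 * t) / (N - 1) := by
    field_simp
    ring
  rw [← sub_nonneg, key]
  refine div_nonneg (mul_nonneg ?_ ?_) hN1.le <;> nlinarith

namespace Matrix

section Spectral

variable {n 𝕜 : Type*} [Fintype n] [DecidableEq n] [RCLike 𝕜] {A : Matrix n n 𝕜}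

lemma IsHermitian.trace_cfc (hA : A.IsHermitian) (f : ℝ → ℝ) :
    (hA.cfc f).trace = ∑ i, (f (hA.eigenvalues i) : 𝕜) := by
  rw [IsHermitian.cfc, Unitary.conjStarAlgAut_apply, trace_mul_cycle, Unitary.coe_star_mul_self,
    Matrix.one_mul, trace_diagonal]
  rfl

lemma IsHermitian.re_trace_mul_self (hA : A.IsHermitian) :
    RCLike.re (A * A).trace = ∑ i, hA.eigenvalues i ^ 2 := by
  rw [← sq, ← cfc_pow_id (R := ℝ) A 2 hA.isSelfAdjoint, hA.cfc_eq, hA.trace_cfc, map_sum]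
  simp only [RCLike.ofReal_re]

lemma IsHermitian.re_trace_sq_le (hA : A.IsHermitian) :
    RCLike.re A.trace ^ 2 ≤ Fintype.card n * RCLike.re (A * A).trace := by
  rw [hA.re_trace_mul_self, hA.trace_eq_sum_eigenvalues, map_sum]
  simp only [RCLike.ofReal_re]
  exact sq_sum_le_card_mul_sum_sq

lemma PosSemidef.sqrt_eq_cfcSqrt (hA : A.PosSemidef) : hA.sqrt = CFC.sqrt A := by
  rw [CFC.sqrt_eq_real_sqrt A hA.nonneg, cfcₙ_eq_cfc, hA.1.cfc_eq]
  rfl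

lemma PosSemidef.posSemidef_sqrt (hA : A.PosSemidef) : hA.sqrt.PosSemidef :=
  hA.sqrt_eq_cfcSqrt ▸ (CFC.sqrt_nonneg A).posSemidef

lemma PosSemidef.sqrt_mul_sqrt (hA : A.PosSemidef) : hA.sqrt * hA.sqrt = A := by
  rw [hA.sqrt_eq_cfcSqrt, CFC.sqrt_mul_sqrt_self A hA.nonneg]

lemma PosSemidef.re_trace_le_re_trace_sqrt_sq (hA : A.PosSemidef) :
    RCLike.re A.trace ≤ RCLike.re hA.sqrt.trace ^ 2 := by
  have hsqrt : hA.sqrt = hA.1.cfc Real.sqrt := rfl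
  rw [hsqrt, hA.1.trace_cfc, hA.1.trace_eq_sum_eigenvalues, map_sum, map_sum]
  simp only [RCLike.ofReal_re]
  calc ∑ i, hA.1.eigenvalues i = ∑ i, √(hA.1.eigenvalues i) ^ 2 := by
        simp only [Real.sq_sqrt (hA.eigenvalues_nonneg _)]
    _ ≤ (∑ i, √(hA.1.eigenvalues i)) ^ 2 :=
        Finset.sum_sq_le_sq_sum_of_nonneg fun i _ => Real.sqrt_nonneg _

end Spectral

section Frobenius

variable {ι : Type*} [Fintype ι] [DecidableEq ι]

lemma sum_sq_sub_rankOne_add_scalar (s : Matrix ι ι ℝ) (w : ι → ℝ) (a b : ℝ) :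
    ∑ i, ∑ j, (s i j - (a * (w i * w j) + b * (if i = j then 1 else 0))) ^ 2 =
      ∑ i, ∑ j, s i j ^ 2 - 2 * (a * (w ⬝ᵥ s *ᵥ w) + b * s.trace)
        + a ^ 2 * (w ⬝ᵥ w) ^ 2 + 2 * a * b * (w ⬝ᵥ w) + b ^ 2 * Fintype.card ι := by
  have hexpand : ∀ i j, (s i j - (a * (w i * w j) + b * (if i = j then 1 else 0))) ^ 2 =
      s i j ^ 2 - 2 * a * (w i * (s i j * w j)) + a ^ 2 * ((w i * w i) * (w j * w j)) +
        if i = j then -2 * b * s i j + 2 * a * b * (w i * w j) + b ^ 2 else 0 := by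
    intro i j
    split_ifs <;> ring
  simp only [hexpand, Finset.sum_add_distrib, Finset.sum_sub_distrib, Finset.sum_ite_eq,
    Finset.mem_univ, if_true, ← Finset.mul_sum, ← Finset.sum_mul, dotProduct, mulVec, trace, diag,
    Finset.sum_const, Finset.card_univ, nsmul_eq_mul]
  ring

lemma sum_sq_sub_scalar (s : Matrix ι ι ℝ) (γ : ℝ) :
    ∑ i, ∑ j, (s i j - γ * (if i = j then 1 else 0)) ^ 2 =
      ∑ i, ∑ j, s i j ^ 2 - 2 * γ * s.trace + γ ^ 2 * Fintype.card ι := by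
  simpa [mul_assoc] using sum_sq_sub_rankOne_add_scalar s 0 0 γ

/-- Bessel's inequality for the Frobenius-orthogonal pair `P = w wᵀ / |w|²` and `1 - P`, in the
form `‖s - X‖² ≥ 0` for `X = μ P + β (1 - P)` the projection of `s` onto their span. -/
lemma sq_add_sq_div_le_sum_sq (s : Matrix ι ι ℝ) {w : ι → ℝ} (hw : w ⬝ᵥ w ≠ 0) {μ : ℝ}
    (hμ : w ⬝ᵥ s *ᵥ w = μ * (w ⬝ᵥ w)) :
    μ ^ 2 + (s.trace - μ) ^ 2 / (Fintype.card ι - 1) ≤ ∑ i, ∑ j, s i j ^ 2 := by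
  set β := (s.trace - μ) / (Fintype.card ι - 1) with hβdef
  -- also for a single index, where `β = 0` because `x / 0 = 0`
  have hβ : β ^ 2 * (Fintype.card ι - 1) = β * (s.trace - μ) := by
    rcases eq_or_ne ((Fintype.card ι : ℝ) - 1) 0 with hN | hN
    · simp [β, hN]
    · simp only [β]
      field_simp
  set a := (μ - β) / (w ⬝ᵥ w)
  have ha : a * (w ⬝ᵥ w) = μ - β := div_mul_cancel₀ _ hw
  have hdist : 0 ≤ ∑ i, ∑ j, (s i j - (a * (w i * w j) + β * (if i = j then 1 else 0))) ^ 2 :=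
    Finset.sum_nonneg fun i _ => Finset.sum_nonneg fun j _ => sq_nonneg _
  rw [sum_sq_sub_rankOne_add_scalar, hμ] at hdist
  calc μ ^ 2 + (s.trace - μ) ^ 2 / (Fintype.card ι - 1) = μ ^ 2 + β * (s.trace - μ) := by
        rw [hβdef]
        ring
    _ ≤ ∑ i, ∑ j, s i j ^ 2 := by
        clear_value a β
        linear_combination hdist - (μ - β - a * (w ⬝ᵥ w)) * ha + hβ

lemma one_add_sq_div_le_sum_sq (s : Matrix ι ι ℝ) {w : ι → ℝ} (hw : 0 < w ⬝ᵥ w)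
    (hs : w ⬝ᵥ w ≤ w ⬝ᵥ s *ᵥ w) (ht : s.trace ≤ Fintype.card ι) (hcard : 1 < Fintype.card ι) :
    1 + (s.trace - 1) ^ 2 / (Fintype.card ι - 1) ≤ ∑ i, ∑ j, s i j ^ 2 := by
  set μ := w ⬝ᵥ s *ᵥ w / (w ⬝ᵥ w)
  have hμ : w ⬝ᵥ s *ᵥ w = μ * (w ⬝ᵥ w) := (div_mul_cancel₀ _ hw.ne').symm
  have hμ1 : 1 ≤ μ := (one_le_div hw).mpr hs
  exact (one_add_sq_div_le_sq_add_sq_div (by exact_mod_cast hcard) ht hμ1).trans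
    (sq_add_sq_div_le_sum_sq s hw.ne' hμ)

end Frobenius

end Matrix

section SqrtGram

variable {ι m 𝕜 : Type*} [Fintype ι] [Fintype m] [DecidableEq m] [RCLike 𝕜]
  {E : ι → Matrix m m 𝕜}

noncomputable def sqrtGram (hE : ∀ i, (E i).PosSemidef) : Matrix ι ι ℝ :=
  Matrix.of fun i j => RCLike.re ((hE i).sqrt * (hE j).sqrt).trace

noncomputable def traceSqrt (hE : ∀ i, (E i).PosSemidef) : ι → ℝ :=
  fun i => RCLike.re (hE i).sqrt.trace

variable (hE : ∀ i, (E i).PosSemidef)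

lemma trace_sqrtGram (hsum : ∑ i, E i = 1) : (sqrtGram hE).trace = Fintype.card m := by
  have hdiag : ∀ i, sqrtGram hE i i = RCLike.re (E i).trace := fun i => by
    rw [sqrtGram, of_apply, PosSemidef.sqrt_mul_sqrt]
  calc (sqrtGram hE).trace = ∑ i, RCLike.re (E i).trace := Finset.sum_congr rfl fun i _ => hdiag i
    _ = Fintype.card m := by rw [← map_sum, ← trace_sum, hsum, trace_one, RCLike.natCast_re]

lemma card_le_dotProduct_traceSqrt (hsum : ∑ i, E i = 1) :
    (Fintype.card m : ℝ) ≤ traceSqrt hE ⬝ᵥ traceSqrt hE := by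
  rw [← trace_sqrtGram hE hsum]
  refine Finset.sum_le_sum fun i _ => ?_
  simpa [sqrtGram, traceSqrt, (hE i).sqrt_mul_sqrt, ← sq] using
    (hE i).re_trace_le_re_trace_sqrt_sq

lemma sq_dotProduct_traceSqrt_le (x : ι → ℝ) :
    (x ⬝ᵥ traceSqrt hE) ^ 2 ≤ Fintype.card m * (x ⬝ᵥ sqrtGram hE *ᵥ x) := by
  set M : Matrix m m 𝕜 := ∑ i, x i • (hE i).sqrt
  have hM : M.IsHermitian :=
    isSelfAdjoint_sum _ fun i _ => (hE i).posSemidef_sqrt.1.smul (IsSelfAdjoint.all (x i))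
  have htrace : RCLike.re M.trace = x ⬝ᵥ traceSqrt hE := by
    simp [M, trace_sum, trace_smul, dotProduct, traceSqrt, RCLike.smul_re]
  have htrace_sq : RCLike.re (M * M).trace = x ⬝ᵥ sqrtGram hE *ᵥ x := by
    simp only [M, Finset.sum_mul_sum, smul_mul_smul_comm, trace_sum, trace_smul, map_sum,
      RCLike.smul_re, dotProduct, mulVec, sqrtGram, of_apply]
    refine Finset.sum_congr rfl fun i _ => ?_
    rw [Finset.mul_sum]
    exact Finset.sum_congr rfl fun j _ => by ring
  rw [← htrace, ← htrace_sq]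
  exact hM.re_trace_sq_le

lemma dotProduct_traceSqrt_le_sqrtGram [Nonempty m] (hsum : ∑ i, E i = 1) :
    traceSqrt hE ⬝ᵥ traceSqrt hE ≤ traceSqrt hE ⬝ᵥ sqrtGram hE *ᵥ traceSqrt hE := by
  have hcard : (0 : ℝ) < Fintype.card m := by exact_mod_cast Fintype.card_pos
  have hle := card_le_dotProduct_traceSqrt hE hsum
  refine le_of_mul_le_mul_left ?_ hcard
  calc (Fintype.card m : ℝ) * (traceSqrt hE ⬝ᵥ traceSqrt hE)
      ≤ (traceSqrt hE ⬝ᵥ traceSqrt hE) ^ 2 := by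
        rw [sq]
        exact mul_le_mul_of_nonneg_right hle (hcard.le.trans hle)
    _ ≤ _ := sq_dotProduct_traceSqrt_le hE (traceSqrt hE)

lemma one_add_sq_div_le_sum_sq_sqrtGram [DecidableEq ι] [Nonempty m] (hsum : ∑ i, E i = 1)
    (hcard : Fintype.card m ≤ Fintype.card ι) (hι : 1 < Fintype.card ι) :
    1 + ((Fintype.card m : ℝ) - 1) ^ 2 / (Fintype.card ι - 1) ≤
      ∑ i, ∑ j, sqrtGram hE i j ^ 2 := by
  have hw : 0 < traceSqrt hE ⬝ᵥ traceSqrt hE :=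
    (Nat.cast_pos.mpr Fintype.card_pos).trans_le (card_le_dotProduct_traceSqrt hE hsum)
  have hbound := one_add_sq_div_le_sum_sq (sqrtGram hE) hw
    (dotProduct_traceSqrt_le_sqrtGram hE hsum)
    (by rw [trace_sqrtGram hE hsum]; exact_mod_cast hcard) hι
  rwa [trace_sqrtGram hE hsum] at hbound

end SqrtGram

/-- For a POVM `{E_i}` on `ℂ^d` with `d ≤ n`, `n ≥ 2`, and all effects nonzero,
and for every real `γ`,
`Σ_{i,j} (S_{ij} − γδ_{ij})² ≥ (1 − γ)² + (n−1)((d−1)/(n−1) − γ)²`,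
where `S_{ij} = tr(√E_i √E_j)`. The right-hand side is `‖S_EA − γ·1‖_F²` for an
equiangular POVM with `n` effects. -/
theorem gram_frobenius_distance_ge_ea
    (d n : ℕ) (hdn : d ≤ n) (hn : 2 ≤ n)
    (E : Fin n → Matrix (Fin d) (Fin d) ℂ)
    (hE : ∀ i, (E i).PosSemidef)
    (hsum : ∑ i, E i = 1)
    (hne : ∀ i, E i ≠ 0)
    (γ : ℝ) :
    (1 - γ) ^ 2 + ((n : ℝ) - 1) * (((d : ℝ) - 1) / ((n : ℝ) - 1) - γ) ^ 2
      ≤ ∑ i, ∑ j, (((hE i).sqrt * (hE j).sqrt).trace.re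
          - γ * (if i = j then 1 else 0)) ^ 2 := by
  have : Nonempty (Fin d) := by
    rcases Nat.eq_zero_or_pos d with rfl | hd
    · exact (hne ⟨0, by omega⟩ (Matrix.ext fun k => k.elim0)).elim
    · exact ⟨⟨0, hd⟩⟩
  have hbound := one_add_sq_div_le_sum_sq_sqrtGram hE hsum (by simpa) (by simp; omega)
  have hexpand := sum_sq_sub_scalar (sqrtGram hE) γ
  simp only [trace_sqrtGram hE hsum, Fintype.card_fin] at hbound hexpand
  have hn1 : (n : ℝ) - 1 ≠ 0 := by
    have : (2 : ℝ) ≤ n := by exact_mod_cast hn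
    linarith
  calc (1 - γ) ^ 2 + ((n : ℝ) - 1) * (((d : ℝ) - 1) / ((n : ℝ) - 1) - γ) ^ 2
      = 1 + ((d : ℝ) - 1) ^ 2 / ((n : ℝ) - 1) - 2 * γ * d + γ ^ 2 * n := by
        field_simp
        ring
    _ ≤ ∑ i, ∑ j, sqrtGram hE i j ^ 2 - 2 * γ * d + γ ^ 2 * n := by linarith
    _ = _ := hexpand.symm
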